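/- arXiv:1011.2366 — 2 statements merged into one kernel-verified Lean document; each statement's English description precedes it below -/
import Mathlib

section
/- Let I ≥ 3, let Y_i = α + σ_i ε_i for i = 1,…,I with ε_i i.i.d. N(0,1) and σ_i > 0 deterministic, and let r_i = (Y_i − Ȳ)². Define Z = B r where B = ((I²−I)·Id − E)/((I−1)(I−2)). Then E[Z_i] = σ_i² for each i = 1,…,I. -/
/-!
Write `Y_j - Ȳ = ∑_k a_{jk} ε_k` with `a_{jk} = σ_j δ_{jk} - σ_k / I`. Since the `ε_k` are
independent, centred and of unit variance,
`E[r_j] = ∑_k a_{jk}² = (1 - 2/I) σ_j² + (∑_k σ_k²) / I²`,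
i.e. `E[r] = A σ²` with `A = (1 - 2/I) Id + E / I²`. Using `E² = I E` one checks `B A = Id`,
so `E[Z] = B A σ² = σ²`.
-/

open MeasureTheory ProbabilityTheory Finset Matrix

noncomputable def debiasingMatrix (ι : Type*) [Fintype ι] [DecidableEq ι] : Matrix ι ι ℝ :=
  let n : ℝ := Fintype.card ι
  ((n - 1) * (n - 2))⁻¹ • ((n ^ 2 - n) • 1 - of fun _ _ => 1)

noncomputable def residualBiasMatrix (ι : Type*) [Fintype ι] [DecidableEq ι] : Matrix ι ι ℝ :=
  let n : ℝ := Fintype.card ι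
  (1 - 2 / n) • 1 + (n ^ 2)⁻¹ • of fun _ _ => 1

section Algebra

variable {ι : Type*} [Fintype ι]

lemma allOnes_mul_allOnes :
    (of fun _ _ => (1 : ℝ) : Matrix ι ι ℝ) * of (fun _ _ => 1) =
      (Fintype.card ι : ℝ) • of fun _ _ => 1 := by
  ext i j
  simp [Matrix.mul_apply]

variable [DecidableEq ι]

lemma debiasingMatrix_mul_residualBiasMatrix (h : 3 ≤ Fintype.card ι) :
    debiasingMatrix ι * residualBiasMatrix ι = 1 := by
  have hn : (3 : ℝ) ≤ Fintype.card ι := by exact_mod_cast h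
  have h0 : (Fintype.card ι : ℝ) ≠ 0 := by linarith
  have h1 : (Fintype.card ι : ℝ) - 1 ≠ 0 := by linarith
  have h2 : (Fintype.card ι : ℝ) - 2 ≠ 0 := by linarith
  simp only [debiasingMatrix, residualBiasMatrix, Matrix.smul_mul, Matrix.mul_smul, sub_mul,
    mul_add, Matrix.one_mul, Matrix.mul_one, allOnes_mul_allOnes]
  ext i j
  simp only [Matrix.smul_apply, Matrix.sub_apply, Matrix.add_apply, one_apply, of_apply,
    smul_eq_mul]
  split_ifs <;> field_simp <;> ring

lemma sub_average_eq_sum_mul (α : ℝ) (σ e : ι → ℝ) (j : ι) :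
    α + σ j * e j - (∑ k, (α + σ k * e k)) / Fintype.card ι =
      ∑ k, ((if k = j then σ j else 0) - σ k / Fintype.card ι) * e k := by
  have : (Fintype.card ι : ℝ) ≠ 0 := Nat.cast_ne_zero.2 (Fintype.card_pos_iff.2 ⟨j⟩).ne'
  simp only [sub_mul, Finset.sum_sub_distrib, Finset.sum_add_distrib, ite_mul, zero_mul,
    Finset.sum_ite_eq', Finset.mem_univ, if_true, Finset.sum_const, Finset.card_univ,
    nsmul_eq_mul, div_mul_eq_mul_div, ← Finset.sum_div]
  field_simp
  ring

lemma sum_sq_sub_average_coeff (σ : ι → ℝ) (j : ι) :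
    ∑ k, ((if k = j then σ j else 0) - σ k / Fintype.card ι) ^ 2 =
      (residualBiasMatrix ι *ᵥ fun k => σ k ^ 2) j := by
  simp only [sub_sq, Finset.sum_add_distrib, Finset.sum_sub_distrib, ite_pow, ite_mul, mul_ite,
    zero_mul, mul_zero, zero_pow two_ne_zero, Finset.sum_ite_eq', Finset.mem_univ, if_true,
    residualBiasMatrix, add_mulVec, smul_mulVec, one_mulVec]
  simp [mulVec, dotProduct, div_pow, ← Finset.sum_div]
  ring

end Algebra

section Moments

variable {Ω ι : Type*} [MeasurableSpace Ω] {P : Measure Ω} [Fintype ι] {ε : ι → Ω → ℝ}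

lemma integral_sq_sum_mul_of_pairwise_indepFun [IsFiniteMeasure P]
    (hL2 : ∀ k, MemLp (ε k) 2 P) (hindep : Pairwise fun k l => ε k ⟂ᵢ[P] ε l)
    (hmean : ∀ k, P[ε k] = 0) (hvar : ∀ k, Var[ε k; P] = 1) (a : ι → ℝ) :
    ∫ ω, (∑ k, a k * ε k ω) ^ 2 ∂P = ∑ k, a k ^ 2 := by
  set X : ι → Ω → ℝ := fun k ω => a k * ε k ω
  have hX : ∀ k, MemLp (X k) 2 P := fun k => (hL2 k).const_mul (a k)
  have hsum : ∀ ω, ∑ k, a k * ε k ω = (∑ k, X k) ω := fun ω => by simp [X]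
  have hmean_sum : P[∑ k, X k] = 0 := by
    simp_rw [Finset.sum_apply]
    rw [integral_finsetSum _ fun k _ => (hX k).integrable one_le_two]
    simp [X, integral_const_mul, hmean]
  simp_rw [hsum]
  rw [← variance_of_integral_eq_zero (memLp_finsetSum' _ fun k _ => hX k).aemeasurable hmean_sum,
    IndepFun.variance_sum (fun k _ => hX k)
      fun k _ l _ hkl => (hindep hkl).comp (measurable_const_mul _) (measurable_const_mul _)]
  simp [X, variance_const_mul, hvar]

variable [DecidableEq ι] (α : ℝ) (σ : ι → ℝ) (j : ι)

lemma integrable_sq_sub_average (hL2 : ∀ k, MemLp (ε k) 2 P) :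
    Integrable (fun ω => (α + σ j * ε j ω - (∑ k, (α + σ k * ε k ω)) / Fintype.card ι) ^ 2) P := by
  simp_rw [fun ω => sub_average_eq_sum_mul α σ (ε · ω) j]
  exact (memLp_finsetSum _ fun k _ => (hL2 k).const_mul _).integrable_sq

lemma integral_sq_sub_average [IsFiniteMeasure P]
    (hL2 : ∀ k, MemLp (ε k) 2 P) (hindep : Pairwise fun k l => ε k ⟂ᵢ[P] ε l)
    (hmean : ∀ k, P[ε k] = 0) (hvar : ∀ k, Var[ε k; P] = 1) :
    ∫ ω, (α + σ j * ε j ω - (∑ k, (α + σ k * ε k ω)) / Fintype.card ι) ^ 2 ∂P =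
      (residualBiasMatrix ι *ᵥ fun k => σ k ^ 2) j := by
  simp_rw [fun ω => sub_average_eq_sum_mul α σ (ε · ω) j]
  rw [integral_sq_sum_mul_of_pairwise_indepFun hL2 hindep hmean hvar, sum_sq_sub_average_coeff]

end Moments

theorem debiased_residuals_recover_variances_general {Ω : Type*} [MeasurableSpace Ω] (P : Measure Ω)
    [IsProbabilityMeasure P] (I : ℕ) (hI : 3 ≤ I) (α : ℝ) (σ : Fin I → ℝ)
    (ε : Fin I → Ω → ℝ) (hmeas : ∀ i, Measurable (ε i))
    (hindep : iIndepFun ε P)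
    (hgauss : ∀ i, Measure.map (ε i) P = gaussianReal 0 1)
    (Y : Fin I → Ω → ℝ) (hY : ∀ i ω, Y i ω = α + σ i * ε i ω)
    (B : Matrix (Fin I) (Fin I) ℝ)
    (hB : B = (((I : ℝ) - 1) * ((I : ℝ) - 2))⁻¹ •
        ((((I : ℝ) ^ 2 - (I : ℝ)) • (1 : Matrix (Fin I) (Fin I) ℝ)) -
          Matrix.of fun _ _ => (1 : ℝ)))
    (r : Fin I → Ω → ℝ) (hr : ∀ j ω, r j ω = (Y j ω - (∑ k, Y k ω) / I) ^ 2)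
    (Z : Fin I → Ω → ℝ) (hZ : ∀ j ω, Z j ω = ∑ k, B j k * r k ω) (i : Fin I) :
    ∫ ω, Z i ω ∂P = (σ i) ^ 2 := by
  have hlaw : ∀ k, HasLaw (ε k) (gaussianReal 0 1) P := fun k =>
    ⟨(hmeas k).aemeasurable, hgauss k⟩
  have hL2 : ∀ k, MemLp (ε k) 2 P := fun k => by
    simpa using (hgauss k ▸ memLp_id_gaussianReal 2).comp_of_map (hmeas k).aemeasurable
  have hmean : ∀ k, P[ε k] = 0 := fun k => by
    rw [(hlaw k).integral_eq, integral_id_gaussianReal]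
  have hvar : ∀ k, Var[ε k; P] = 1 := fun k => by
    rw [(hlaw k).variance_eq, variance_id_gaussianReal, NNReal.coe_one]
  have hpair : Pairwise fun k l => ε k ⟂ᵢ[P] ε l := fun k l hkl => hindep.indepFun hkl
  have hr' : ∀ j, r j = fun ω =>
      (α + σ j * ε j ω - (∑ k, (α + σ k * ε k ω)) / Fintype.card (Fin I)) ^ 2 := fun j => by
    ext ω; simp [hr, hY]
  have hB' : B = debiasingMatrix (Fin I) := by simp [hB, debiasingMatrix]
  calc ∫ ω, Z i ω ∂P = ∑ j, B i j * ∫ ω, r j ω ∂P := by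
        simp_rw [hZ]
        rw [integral_finsetSum _ fun j _ =>
          (hr' j ▸ integrable_sq_sub_average α σ j hL2).const_mul _]
        simp_rw [integral_const_mul]
    _ = (debiasingMatrix (Fin I) *ᵥ (residualBiasMatrix (Fin I) *ᵥ fun k => σ k ^ 2)) i := by
        simp_rw [hr', integral_sq_sub_average α σ _ hL2 hpair hmean hvar, hB']
        rfl
    _ = σ i ^ 2 := by
        rw [mulVec_mulVec, debiasingMatrix_mul_residualBiasMatrix (by simpa using hI), one_mulVec]

theorem debiased_residuals_recover_variances {Ω : Type*} [MeasurableSpace Ω] (P : Measure Ω)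
    [IsProbabilityMeasure P] (I : ℕ) (hI : 3 ≤ I) (α : ℝ) (σ : Fin I → ℝ)
    (hσ : ∀ i, 0 < σ i) (ε : Fin I → Ω → ℝ) (hmeas : ∀ i, Measurable (ε i))
    (hindep : iIndepFun ε P)
    (hgauss : ∀ i, Measure.map (ε i) P = gaussianReal 0 1)
    (Y : Fin I → Ω → ℝ) (hY : ∀ i ω, Y i ω = α + σ i * ε i ω)
    (B : Matrix (Fin I) (Fin I) ℝ)
    (hB : B = (((I : ℝ) - 1) * ((I : ℝ) - 2))⁻¹ •
        ((((I : ℝ) ^ 2 - (I : ℝ)) • (1 : Matrix (Fin I) (Fin I) ℝ)) -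
          Matrix.of fun _ _ => (1 : ℝ)))
    (r : Fin I → Ω → ℝ) (hr : ∀ j ω, r j ω = (Y j ω - (∑ k, Y k ω) / I) ^ 2)
    (Z : Fin I → Ω → ℝ) (hZ : ∀ j ω, Z j ω = ∑ k, B j k * r k ω) (i : Fin I) :
    ∫ ω, Z i ω ∂P = (σ i) ^ 2 :=
  debiased_residuals_recover_variances_general P I hI α σ ε hmeas hindep hgauss Y hY B hB r hr Z hZ
    i
end

section
/- Let I ≥ 3 and let (Y_1,…,Y_I) be multivariate normal with mean α·e, Var(Y_i) = σ_i², Cov(Y_i,Y_j) = ρσ_iσ_j for i≠j. With r_i = (Y_i − Ȳ)² and Z = B r where B = ((I²−I)Id − E)/((I−1)(I−2)), one has E[Z_i] = σ_i² − (2ρ/(I−1)) σ_i ∑_{j≠i} σ_j + (2ρ/((I−1)(I−2))) ∑_{1≤j<k≤I, j≠i, k≠i} σ_j σ_k. -/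
open MeasureTheory ProbabilityTheory Finset Matrix

/-! Only second moments enter. Writing `X_j = Y_j - α`, the residual `Y_k - Ȳ` equals
`X_k - (1/I) ∑ X_j`, so `E[r_k]` is a quadratic form in the covariance matrix; for equicorrelated
errors it depends only on `σ_k`, `S = ∑ σ_j` and `Q = ∑ σ_j²`. Applying `B` leaves an identity
between these quantities, once the pair sum over `j < k` avoiding `i` is expressed through
`2 ∑_{j<k} σ_j σ_k = (S - σ_i)² - (Q - σ_i²)`. -/

theorem Finset.sq_sum_eq_sum_sq_add_two_mul_sum_lt {ι R : Type*} [LinearOrder ι] [CommRing R]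
    (s : Finset ι) (f : ι → R) :
    (∑ j ∈ s, f j) ^ 2 = ∑ j ∈ s, f j ^ 2 + 2 * ∑ j ∈ s, ∑ k ∈ s with j < k, f j * f k := by
  have hsplit : ∀ j ∈ s, ∑ k ∈ s, f j * f k =
      f j ^ 2 + ∑ k ∈ s with j < k, f j * f k + ∑ k ∈ s with k < j, f j * f k := by
    intro j hj
    rw [← sum_filter_add_sum_filter_not s (j < ·), add_comm (f j ^ 2), add_assoc]
    congr 1
    have : {k ∈ s | ¬j < k} = insert j {k ∈ s | k < j} := by ext k; grind
    rw [this, sum_insert (by simp), sq]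
  have hswap : ∑ j ∈ s, ∑ k ∈ s with k < j, f j * f k =
      ∑ j ∈ s, ∑ k ∈ s with j < k, f j * f k := by
    rw [sum_comm' (t' := s) (s' := fun k => {j ∈ s | k < j}) (fun j k => by simp; tauto)]
    simp_rw [mul_comm]
  rw [sq, sum_mul_sum, sum_congr rfl hsplit, sum_add_distrib, sum_add_distrib, hswap]
  ring

section Equicorrelated

variable {ι : Type*} [DecidableEq ι]

def equicorrCov (σ : ι → ℝ) (ρ : ℝ) (j l : ι) : ℝ :=
  if j = l then σ j ^ 2 else ρ * σ j * σ l

theorem equicorrCov_eq_add_diag (σ : ι → ℝ) (ρ : ℝ) (j l : ι) :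
    equicorrCov σ ρ j l = ρ * σ j * σ l + if j = l then (1 - ρ) * σ j ^ 2 else 0 := by
  unfold equicorrCov
  split_ifs with h
  · subst h; ring
  · ring

@[simp]
theorem equicorrCov_self (σ : ι → ℝ) (ρ : ℝ) (j : ι) : equicorrCov σ ρ j j = σ j ^ 2 :=
  if_pos rfl

variable [Fintype ι]

theorem sum_equicorrCov_row (σ : ι → ℝ) (ρ : ℝ) (k : ι) :
    ∑ l, equicorrCov σ ρ k l = (1 - ρ) * σ k ^ 2 + ρ * σ k * ∑ l, σ l := by
  simp [equicorrCov_eq_add_diag, sum_add_distrib, mul_sum, add_comm]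

end Equicorrelated

theorem sub_sum_div_card_eq {ι : Type*} [Fintype ι] [Nonempty ι] (x : ι → ℝ) (a : ℝ) (k : ι) :
    x k - (∑ j, x j) / Fintype.card ι = (x k - a) - (Fintype.card ι : ℝ)⁻¹ * ∑ j, (x j - a) := by
  have : (Fintype.card ι : ℝ) ≠ 0 := Nat.cast_ne_zero.2 Fintype.card_ne_zero
  rw [sum_sub_distrib, sum_const, card_univ, nsmul_eq_mul]
  field_simp
  ring

theorem smul_sub_all_ones_mulVec_apply {ι : Type*} [Fintype ι] [DecidableEq ι] (a b : ℝ)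
    (v : ι → ℝ) (i : ι) :
    ((a • (b • (1 : Matrix ι ι ℝ) - of fun _ _ => 1)) *ᵥ v) i = a * (b * v i - ∑ k, v k) := by
  simp [mulVec, dotProduct, one_apply, sub_mul, mul_sub, sum_sub_distrib, mul_sum, mul_assoc]

theorem debiased_residual_moment_equicorrCov {n : ℕ} (hn : 3 ≤ n) (σ : Fin n → ℝ) (ρ : ℝ)
    (i : Fin n) :
    (((((n : ℝ) - 1) * ((n : ℝ) - 2))⁻¹ •
        (((n : ℝ) ^ 2 - n) • (1 : Matrix (Fin n) (Fin n) ℝ) - of fun _ _ => 1)) *ᵥ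
      fun k => equicorrCov σ ρ k k - 2 * (n : ℝ)⁻¹ * ∑ l, equicorrCov σ ρ k l +
        (n : ℝ)⁻¹ ^ 2 * ∑ j, ∑ l, equicorrCov σ ρ j l) i =
      σ i ^ 2 - (2 * ρ / ((n : ℝ) - 1)) * σ i * (∑ j ∈ univ.erase i, σ j) +
        (2 * ρ / (((n : ℝ) - 1) * ((n : ℝ) - 2))) *
          (∑ j ∈ univ.erase i, ∑ k ∈ (univ.erase i).filter (fun k => j < k), σ j * σ k) := by
  have hn' : (3 : ℝ) ≤ n := by exact_mod_cast hn
  have hn0 : (n : ℝ) ≠ 0 := by linarith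
  have hn1 : (n : ℝ) - 1 ≠ 0 := by linarith
  have hn2 : (n : ℝ) - 2 ≠ 0 := by linarith
  have hpairs := sq_sum_eq_sum_sq_add_two_mul_sum_lt (univ.erase i) σ
  rw [sum_erase_eq_sub (mem_univ i), sum_erase_eq_sub (mem_univ i)] at hpairs
  have hpairs' : ∑ j ∈ univ.erase i, ∑ k ∈ (univ.erase i).filter (fun k => j < k), σ j * σ k =
      (((∑ j, σ j) - σ i) ^ 2 - ((∑ j, σ j ^ 2) - σ i ^ 2)) / 2 := by
    linear_combination -hpairs / 2
  rw [smul_sub_all_ones_mulVec_apply, sum_erase_eq_sub (mem_univ i), hpairs']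
  simp only [equicorrCov_self, sum_equicorrCov_row, sum_add_distrib,
    sum_sub_distrib, ← mul_sum, ← sum_mul, sum_const, card_univ, Fintype.card_fin, nsmul_eq_mul]
  field_simp
  ring

theorem integrable_sq_sub_mul_sum {Ω ι : Type*} [MeasurableSpace Ω] {P : Measure Ω} [Fintype ι]
    {X : ι → Ω → ℝ} (hX : ∀ j, MemLp (X j) 2 P) (c : ℝ) (k : ι) :
    Integrable (fun ω => (X k ω - c * ∑ j, X j ω) ^ 2) P :=
  ((hX k).sub ((memLp_finsetSum _ fun j _ => hX j).const_mul c)).integrable_sq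

theorem integral_sq_sub_mul_sum {Ω ι : Type*} [MeasurableSpace Ω] {P : Measure Ω} [Fintype ι]
    {X : ι → Ω → ℝ} (hX : ∀ j, MemLp (X j) 2 P) (c : ℝ) (k : ι) :
    ∫ ω, (X k ω - c * ∑ j, X j ω) ^ 2 ∂P =
      ∫ ω, X k ω * X k ω ∂P - 2 * c * ∑ j, ∫ ω, X k ω * X j ω ∂P +
        c ^ 2 * ∑ j, ∑ l, ∫ ω, X j ω * X l ω ∂P := by
  have hprod : ∀ j l, Integrable (fun ω => X j ω * X l ω) P :=
    fun j l => (hX j).integrable_mul (hX l)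
  have hrow : Integrable (fun ω => 2 * c * ∑ j, X k ω * X j ω) P :=
    (integrable_finsetSum _ fun j _ => hprod k j).const_mul _
  have hall : Integrable (fun ω => c ^ 2 * ∑ j, ∑ l, X j ω * X l ω) P :=
    (integrable_finsetSum _ fun j _ => integrable_finsetSum _ fun l _ => hprod j l).const_mul _
  calc ∫ ω, (X k ω - c * ∑ j, X j ω) ^ 2 ∂P
      = ∫ ω, X k ω * X k ω - 2 * c * ∑ j, X k ω * X j ω +
          c ^ 2 * ∑ j, ∑ l, X j ω * X l ω ∂P := by
        congr with ω
        rw [← mul_sum, ← sum_mul_sum]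
        ring
    _ = _ := by
        rw [integral_add ((hprod k k).sub hrow : Integrable (fun ω => _ - _) P) hall,
          integral_sub (hprod k k) hrow, integral_const_mul, integral_const_mul,
          integral_finsetSum _ fun j _ => hprod k j,
          integral_finsetSum _ fun j _ => integrable_finsetSum _ fun l _ => hprod j l]
        simp_rw [integral_finsetSum _ fun l _ => hprod _ l]

theorem bias_of_debiased_residuals_correlated_general {Ω : Type*} [MeasurableSpace Ω] (P : Measure Ω)
    [IsProbabilityMeasure P] (I : ℕ) (hI : 3 ≤ I) (α ρ : ℝ) (σ : Fin I → ℝ)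
    (hσ : ∀ i, 0 < σ i) (Y : Fin I → Ω → ℝ) (hmeas : ∀ i, Measurable (Y i))
    (hmean : ∀ i, ∫ ω, Y i ω ∂P = α)
    (hvar : ∀ i, variance (Y i) P = (σ i) ^ 2)
    (hcov : ∀ i j, i ≠ j → ∫ ω, (Y i ω - α) * (Y j ω - α) ∂P = ρ * σ i * σ j)
    (B : Matrix (Fin I) (Fin I) ℝ)
    (hB : B = (((I : ℝ) - 1) * ((I : ℝ) - 2))⁻¹ •
        ((((I : ℝ) ^ 2 - (I : ℝ)) • (1 : Matrix (Fin I) (Fin I) ℝ)) -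
          Matrix.of fun _ _ => (1 : ℝ)))
    (r : Fin I → Ω → ℝ) (hr : ∀ j ω, r j ω = (Y j ω - (∑ k, Y k ω) / I) ^ 2)
    (Z : Fin I → Ω → ℝ) (hZ : ∀ j ω, Z j ω = ∑ k, B j k * r k ω) (i : Fin I) :
    ∫ ω, Z i ω ∂P =
      (σ i) ^ 2 - (2 * ρ / ((I : ℝ) - 1)) * σ i * (∑ j ∈ univ.erase i, σ j) +
        (2 * ρ / (((I : ℝ) - 1) * ((I : ℝ) - 2))) *
          (∑ j ∈ univ.erase i, ∑ k ∈ (univ.erase i).filter (fun k => j < k),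
            σ j * σ k) := by
  have : NeZero I := ⟨by omega⟩
  have hL2 : ∀ j, MemLp (fun ω => Y j ω - α) 2 P := fun j =>
    (memLp_two_of_variance_ne_zero (hmeas j).aestronglyMeasurable
      (by rw [hvar]; exact pow_ne_zero 2 (hσ j).ne')).sub (memLp_const α)
  have hsecond : ∀ j l, ∫ ω, (Y j ω - α) * (Y l ω - α) ∂P = equicorrCov σ ρ j l := by
    intro j l
    rcases eq_or_ne j l with rfl | hjl
    · rw [equicorrCov_self, ← hvar, variance_eq_integral (hmeas j).aemeasurable, hmean]
      simp_rw [sq]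
    · rw [hcov j l hjl, equicorrCov, if_neg hjl]
  have hr_centered (k) : r k = fun ω => ((Y k ω - α) - (I : ℝ)⁻¹ * ∑ j, (Y j ω - α)) ^ 2 := by
    ext ω
    have hcenter := sub_sum_div_card_eq (Y · ω) α k
    rw [Fintype.card_fin] at hcenter
    rw [hr, hcenter]
  have hZ_integral : ∫ ω, Z i ω ∂P = (B *ᵥ fun k => ∫ ω, r k ω ∂P) i := by
    simp_rw [hZ, mulVec, dotProduct, hr_centered]
    rw [integral_finsetSum _ fun k _ => (integrable_sq_sub_mul_sum hL2 _ k).const_mul _]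
    simp_rw [integral_const_mul]
  simp_rw [hZ_integral, hr_centered, integral_sq_sub_mul_sum hL2, hsecond, hB]
  exact debiased_residual_moment_equicorrCov hI σ ρ i

theorem bias_of_debiased_residuals_correlated {Ω : Type*} [MeasurableSpace Ω] (P : Measure Ω)
    [IsProbabilityMeasure P] (I : ℕ) (hI : 3 ≤ I) (α ρ : ℝ) (σ : Fin I → ℝ)
    (hσ : ∀ i, 0 < σ i) (Y : Fin I → Ω → ℝ) (hmeas : ∀ i, Measurable (Y i))
    (hgauss : ∀ a : Fin I → ℝ, ∃ (m : ℝ) (v : NNReal),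
      Measure.map (fun ω => ∑ i, a i * Y i ω) P = gaussianReal m v)
    (hmean : ∀ i, ∫ ω, Y i ω ∂P = α)
    (hvar : ∀ i, variance (Y i) P = (σ i) ^ 2)
    (hcov : ∀ i j, i ≠ j → ∫ ω, (Y i ω - α) * (Y j ω - α) ∂P = ρ * σ i * σ j)
    (B : Matrix (Fin I) (Fin I) ℝ)
    (hB : B = (((I : ℝ) - 1) * ((I : ℝ) - 2))⁻¹ •
        ((((I : ℝ) ^ 2 - (I : ℝ)) • (1 : Matrix (Fin I) (Fin I) ℝ)) -
          Matrix.of fun _ _ => (1 : ℝ)))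
    (r : Fin I → Ω → ℝ) (hr : ∀ j ω, r j ω = (Y j ω - (∑ k, Y k ω) / I) ^ 2)
    (Z : Fin I → Ω → ℝ) (hZ : ∀ j ω, Z j ω = ∑ k, B j k * r k ω) (i : Fin I) :
    ∫ ω, Z i ω ∂P =
      (σ i) ^ 2 - (2 * ρ / ((I : ℝ) - 1)) * σ i * (∑ j ∈ univ.erase i, σ j) +
        (2 * ρ / (((I : ℝ) - 1) * ((I : ℝ) - 2))) *
          (∑ j ∈ univ.erase i, ∑ k ∈ (univ.erase i).filter (fun k => j < k),
            σ j * σ k) :=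
  bias_of_debiased_residuals_correlated_general P I hI α ρ σ hσ Y hmeas hmean hvar hcov B hB r hr Z
    hZ i
end
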